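/- Under the conformal change G = 2(k−U)g, the symmetric differential of a 1-form u satisfies (dᴳˢ u)ᵢⱼ = 2(k−U) (dᵍˢ (u/(2(k−U))))ᵢⱼ − (dU, u/(2(k−U)))_g gᵢⱼ, where dˢ denotes the symmetrized covariant derivative (1/2)(∇ᵢuⱼ + ∇ⱼuᵢ) with respect to the indicated metric. -/

import Mathlib

/-! For `G = φ g` the Christoffel symbols change by
`ᴳΓᵏᵢⱼ = Γᵏᵢⱼ + (∂ᵢφ δᵏⱼ + ∂ⱼφ δᵏᵢ − gᵢⱼ gᵏˡ∂ₗφ) / (2φ)`, so contracting with `u` gives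
`dᴳˢu = dˢu − (∂ᵢφ uⱼ + ∂ⱼφ uᵢ) / (2φ) + (dφ, u)_g gᵢⱼ / (2φ)`. The Leibniz rule gives
`φ dˢ(u/φ) = dˢu − (∂ᵢφ uⱼ + ∂ⱼφ uᵢ) / (2φ)`, and for `φ = 2(k − U)` one has `dφ = −2 dU`. -/

open scoped BigOperators

/-- Partial derivative in coordinates on `ℝⁿ`. -/
noncomputable def pd {n : ℕ} (f : (Fin n → ℝ) → ℝ) (i : Fin n) (x : Fin n → ℝ) : ℝ :=
  fderiv ℝ f x (Pi.single i 1)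

/-- Christoffel symbols of the Levi-Civita connection of `g` (with inverse `ginv`). -/
noncomputable def christoffel {n : ℕ} (g ginv : (Fin n → ℝ) → Matrix (Fin n) (Fin n) ℝ)
    (x : Fin n → ℝ) (k i j : Fin n) : ℝ :=
  (1 / 2) * ∑ l, ginv x k l *
    (pd (fun y => g y l j) i x + pd (fun y => g y l i) j x - pd (fun y => g y i j) l x)

/-- Symmetric differential `(dˢu)ᵢⱼ = ½(∇ᵢuⱼ + ∇ⱼuᵢ)` of a 1-form `u` with respect to
the Levi-Civita connection of `g`. -/
noncomputable def dsym {n : ℕ} (g ginv : (Fin n → ℝ) → Matrix (Fin n) (Fin n) ℝ)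
    (u : (Fin n → ℝ) → Fin n → ℝ) (x : Fin n → ℝ) (i j : Fin n) : ℝ :=
  (1 / 2) * (pd (fun y => u y j) i x + pd (fun y => u y i) j x)
    - ∑ k, christoffel g ginv x k i j * u x k

open Finset

section PartialDerivative

variable {n : ℕ} {f h : (Fin n → ℝ) → ℝ} {x : Fin n → ℝ}

lemma pd_mul (hf : DifferentiableAt ℝ f x) (hh : DifferentiableAt ℝ h x) (i : Fin n) :
    pd (fun y => f y * h y) i x = pd f i x * h x + f x * pd h i x := by
  simp only [pd, fderiv_fun_mul hf hh, add_apply, smul_apply, smul_eq_mul]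
  ring

lemma pd_inv (hf : DifferentiableAt ℝ f x) (hx : f x ≠ 0) (i : Fin n) :
    pd (fun y => (f y)⁻¹) i x = -pd f i x / f x ^ 2 := by
  have hinv : HasFDerivAt (fun y => (f y)⁻¹)
      ((ContinuousLinearMap.toSpanSingleton ℝ (-(f x ^ 2)⁻¹)).comp (fderiv ℝ f x)) x :=
    (hasFDerivAt_inv hx).comp x hf.hasFDerivAt
  simp only [pd, hinv.fderiv, ContinuousLinearMap.comp_apply,
    ContinuousLinearMap.toSpanSingleton_apply, smul_eq_mul]
  ring

lemma pd_const_mul (hf : DifferentiableAt ℝ f x) (c : ℝ) (i : Fin n) :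
    pd (fun y => c * f y) i x = c * pd f i x := by
  simp [pd, fderiv_const_mul hf]

lemma pd_const_sub (c : ℝ) (i : Fin n) : pd (fun y => c - f y) i x = -pd f i x := by
  simp [pd, fderiv_const_sub]

end PartialDerivative

lemma Matrix.isSymm_of_mul_eq_one {m α : Type*} [Fintype m] [DecidableEq m] [CommRing α]
    {A B : Matrix m m α} (hB : B.IsSymm)
    (hAB : A * B = 1) : A.IsSymm := by
  rw [← Matrix.inv_eq_left_inv hAB]
  exact hB.inv

section ConformalChange

variable {n : ℕ} {g ginv : (Fin n → ℝ) → Matrix (Fin n) (Fin n) ℝ} {φ : (Fin n → ℝ) → ℝ}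
  {x : Fin n → ℝ}

lemma christoffel_conformal (hginv : ginv x * g x = 1)
    (hg : ∀ a b, DifferentiableAt ℝ (fun y => g y a b) x) (hφ : DifferentiableAt ℝ φ x)
    (hφx : φ x ≠ 0) (k i j : Fin n) :
    christoffel (fun y => φ y • g y) (fun y => (φ y)⁻¹ • ginv y) x k i j
      = christoffel g ginv x k i j
        + (2 * φ x)⁻¹ * (pd φ i x * (1 : Matrix (Fin n) (Fin n) ℝ) k j
          + pd φ j x * (1 : Matrix (Fin n) (Fin n) ℝ) k i
          - g x i j * ∑ l, ginv x k l * pd φ l x) := by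
  have hδ : ∀ a b, ∑ l, ginv x a l * g x l b = (1 : Matrix (Fin n) (Fin n) ℝ) a b :=
    fun a b => by rw [← hginv, Matrix.mul_apply]
  rw [← hδ k j, ← hδ k i]
  simp only [christoffel, Matrix.smul_apply, smul_eq_mul, pd_mul hφ (hg _ _), mul_sum,
    ← sum_add_distrib, ← sum_sub_distrib]
  refine sum_congr rfl fun l _ => ?_
  field_simp
  ring

lemma sum_christoffel_conformal_mul (hginv : ginv x * g x = 1)
    (hg : ∀ a b, DifferentiableAt ℝ (fun y => g y a b) x) (hφ : DifferentiableAt ℝ φ x)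
    (hφx : φ x ≠ 0) (v : Fin n → ℝ) (i j : Fin n) :
    ∑ k, christoffel (fun y => φ y • g y) (fun y => (φ y)⁻¹ • ginv y) x k i j * v k
      = ∑ k, christoffel g ginv x k i j * v k
        + (2 * φ x)⁻¹ * (pd φ i x * v j + pd φ j x * v i
          - g x i j * ∑ k, ∑ l, ginv x k l * pd φ l x * v k) := by
  simp only [christoffel_conformal hginv hg hφ hφx, add_mul, sum_add_distrib, add_right_inj,
    mul_assoc, ← mul_sum]
  congr 1
  simp only [sub_mul, add_mul, sum_sub_distrib, sum_add_distrib, mul_assoc, ← mul_sum, sum_mul,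
    Matrix.one_apply, ite_mul, one_mul, zero_mul, sum_ite_eq', mem_univ, if_true]

lemma dsym_smul {ψ : (Fin n → ℝ) → ℝ} {u : (Fin n → ℝ) → Fin n → ℝ}
    (hψ : DifferentiableAt ℝ ψ x) (hu : ∀ a, DifferentiableAt ℝ (fun y => u y a) x)
    (i j : Fin n) :
    dsym g ginv (fun y => ψ y • u y) x i j
      = ψ x * dsym g ginv u x i j + (pd ψ i x * u x j + pd ψ j x * u x i) / 2 := by
  have hΓ : ∑ k, christoffel g ginv x k i j * (ψ x * u x k)
      = ψ x * ∑ k, christoffel g ginv x k i j * u x k := by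
    simp only [mul_sum, mul_left_comm]
  simp only [dsym, Pi.smul_apply, smul_eq_mul, pd_mul hψ (hu _), hΓ]
  ring

lemma dsym_conformal (hginv : ginv x * g x = 1)
    (hg : ∀ a b, DifferentiableAt ℝ (fun y => g y a b) x) (hφ : DifferentiableAt ℝ φ x)
    (hφx : φ x ≠ 0) {u : (Fin n → ℝ) → Fin n → ℝ}
    (hu : ∀ a, DifferentiableAt ℝ (fun y => u y a) x) (i j : Fin n) :
    dsym (fun y => φ y • g y) (fun y => (φ y)⁻¹ • ginv y) u x i j
      = φ x * dsym g ginv (fun y => (φ y)⁻¹ • u y) x i j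
        + (2 * φ x)⁻¹ * g x i j * ∑ k, ∑ l, ginv x k l * pd φ l x * u x k := by
  rw [dsym_smul (ψ := fun y => (φ y)⁻¹) (hφ.inv hφx) hu, pd_inv hφ hφx, pd_inv hφ hφx]
  simp only [dsym, sum_christoffel_conformal_mul hginv hg hφ hφx]
  field_simp
  ring

end ConformalChange

/-- Under the conformal change `G = 2(k₀−U)g`, the symmetric differential
of a 1-form `u` satisfies
`(dᴳˢu)ᵢⱼ = 2(k₀−U)(dᵍˢ(u/(2(k₀−U))))ᵢⱼ − (dU, u/(2(k₀−U)))_g gᵢⱼ`. -/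
theorem dsym_conformal_change {n : ℕ}
    (g ginv : (Fin n → ℝ) → Matrix (Fin n) (Fin n) ℝ)
    (U : (Fin n → ℝ) → ℝ) (k₀ : ℝ)
    (hk : ∀ x, U x < k₀)
    (hg : ∀ i j, ContDiff ℝ 2 fun x => g x i j)
    (hgs : ∀ x i j, g x i j = g x j i)
    (hginv : ∀ x, ginv x * g x = 1)
    (hU : ContDiff ℝ 2 U)
    (u : (Fin n → ℝ) → Fin n → ℝ)
    (hu : ∀ i, ContDiff ℝ 1 fun x => u x i) :
    ∀ (x : Fin n → ℝ) (i j : Fin n),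
      dsym (fun y => (2 * (k₀ - U y)) • g y) (fun y => (2 * (k₀ - U y))⁻¹ • ginv y) u x i j
        = (2 * (k₀ - U x)) *
            dsym g ginv (fun y => (2 * (k₀ - U y))⁻¹ • u y) x i j
          - (∑ a, ∑ b, ginv x a b * pd U a x * ((2 * (k₀ - U x))⁻¹ * u x b)) * g x i j := by
  intro x i j
  have hUx : DifferentiableAt ℝ U x := (hU.differentiable two_ne_zero).differentiableAt
  have hφ : DifferentiableAt ℝ (fun y => 2 * (k₀ - U y)) x :=
    (hUx.const_sub k₀).const_mul 2
  have hφx : 2 * (k₀ - U x) ≠ 0 := by linarith [hk x]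
  have hpdφ (l : Fin n) : pd (fun y => 2 * (k₀ - U y)) l x = -2 * pd U l x := by
    rw [pd_const_mul (hUx.const_sub k₀), pd_const_sub]
    ring
  have hginv_symm : (ginv x).IsSymm :=
    Matrix.isSymm_of_mul_eq_one (Matrix.IsSymm.ext fun i j => hgs x j i) (hginv x)
  have hdφ_u : ∑ k, ∑ l, ginv x k l * pd (fun y => 2 * (k₀ - U y)) l x * u x k
      = -2 * (2 * (k₀ - U x))
          * ∑ a, ∑ b, ginv x a b * pd U a x * ((2 * (k₀ - U x))⁻¹ * u x b) := by
    simp only [hpdφ, mul_sum]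
    rw [sum_comm]
    refine sum_congr rfl fun a _ => sum_congr rfl fun b _ => ?_
    rw [hginv_symm.apply b a]
    field_simp [sub_ne_zero.mpr (hk x).ne']
  rw [dsym_conformal (hginv x) (fun a b => ((hg a b).differentiable two_ne_zero).differentiableAt)
    hφ hφx (fun a => ((hu a).differentiable one_ne_zero).differentiableAt), hdφ_u]
  generalize 2 * (k₀ - U x) = c at hφx ⊢
  field_simp
  ring
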